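/- arXiv:2505.07477 — 3 statements merged into one kernel-verified Lean document; each statement's English description precedes it below -/
import Mathlib

section
/- Let E be a real Banach space, N a positive integer, and u : E → ℝ → E a function. Suppose x : {0,1,…,N} → E is a sequential DDIM trajectory, i.e. x_n = x_{n+1} − (1/N)·u(x_{n+1}, (n+1)/N) for every n with 0 ≤ n < N, and suppose y : {0,1,…,N} → E is a Picard fixed point, i.e. y_n = y_N − (1/N)·∑_{i=n+1}^{N} u(y_i, i/N) for every n with 0 ≤ n ≤ N. If x_N = y_N, then x_n = y_n for every n with 0 ≤ n ≤ N. -/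
/-! Splitting off the first term of the Picard sum shows that a Picard fixed point obeys the
same one-step recursion as the DDIM trajectory; downward induction from `N` then identifies them. -/

open Finset

theorem eq_sub_smul_of_eq_sub_smul_sum_Icc {R M : Type*} [Ring R] [AddCommGroup M] [Module R M]
    {N : ℕ} (c : R) (f : ℕ → M) {y : ℕ → M}
    (hy : ∀ n ≤ N, y n = y N - c • ∑ i ∈ Icc (n + 1) N, f i) {n : ℕ} (hn : n < N) :
    y n = y (n + 1) - c • f (n + 1) := by
  have hsplit : ∑ i ∈ Icc (n + 1) N, f i = f (n + 1) + ∑ i ∈ Icc (n + 1 + 1) N, f i := by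
    rw [← add_sum_Ioc_eq_sum_Icc hn, ← Icc_add_one_left_eq_Ioc]
  rw [hy n hn.le, hy (n + 1) hn, hsplit, smul_add]
  abel

theorem eq_of_backward_recursion {α : Type*} {N : ℕ} (F : ℕ → α → α) {x y : ℕ → α}
    (hx : ∀ n < N, x n = F n (x (n + 1))) (hy : ∀ n < N, y n = F n (y (n + 1)))
    (hN : x N = y N) : ∀ n ≤ N, x n = y n := fun _ hn =>
  Nat.decreasingInduction (fun k hk ih => by rw [hx k hk, hy k hk, ih]) hN hn

theorem ddim_eq_picard_fixed_point_general
    {E : Type*} [NormedAddCommGroup E] [NormedSpace ℝ E]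
    (N : ℕ) (u : E → ℝ → E) (x y : ℕ → E)
    (hx : ∀ n, n < N →
      x n = x (n + 1) - (1 / (N : ℝ)) • u (x (n + 1)) (((n : ℝ) + 1) / N))
    (hy : ∀ n, n ≤ N →
      y n = y N - (1 / (N : ℝ)) • ∑ i ∈ Finset.Icc (n + 1) N, u (y i) ((i : ℝ) / N))
    (hinit : x N = y N) :
    ∀ n, n ≤ N → x n = y n := by
  refine eq_of_backward_recursion (fun n z => z - (1 / (N : ℝ)) • u z (((n : ℝ) + 1) / N))
    hx (fun n hn => ?_) hinit
  simpa using eq_sub_smul_of_eq_sub_smul_sum_Icc _ _ hy hn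

/-- **Proposition 1 (SDO paper).** If `x` is a sequential DDIM trajectory and `y` is a
Picard fixed point for the same step count `N` and velocity function `u`, and the initial
noises agree (`x N = y N`), then the whole trajectories agree. -/
theorem ddim_eq_picard_fixed_point
    {E : Type*} [NormedAddCommGroup E] [NormedSpace ℝ E] [CompleteSpace E]
    (N : ℕ) (hN : 0 < N) (u : E → ℝ → E) (x y : ℕ → E)
    (hx : ∀ n, n < N →
      x n = x (n + 1) - (1 / (N : ℝ)) • u (x (n + 1)) (((n : ℝ) + 1) / N))
    (hy : ∀ n, n ≤ N →
      y n = y N - (1 / (N : ℝ)) • ∑ i ∈ Finset.Icc (n + 1) N, u (y i) ((i : ℝ) / N))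
    (hinit : x N = y N) :
    ∀ n, n ≤ N → x n = y n :=
  ddim_eq_picard_fixed_point_general N u x y hx hy hinit
end

section
/- Let X and Y be real Banach spaces, and let ρ, L, λ be nonnegative real numbers with λ < 1. Let g : X →L[ℝ] ℝ be a continuous linear functional with ‖g‖ ≤ ρ, let A : X →L[ℝ] X be a continuous linear map with ‖A‖ ≤ λ, and let B : Y →L[ℝ] X be a continuous linear map with ‖B‖ ≤ L. Then I − A is invertible as a continuous linear map, and ‖g ∘ (I − A)⁻¹ ∘ B − g ∘ B‖ ≤ λ·ρ·L/(1 − λ). -/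
/-- **Theorem 4.1 of the SDO paper (parameter case).** If `g : X →L[ℝ] ℝ` has norm `≤ ρ`,
`A : X →L[ℝ] X` has norm `≤ λ < 1`, and `B : Y →L[ℝ] X` has norm `≤ L`, then `I - A`
is invertible and the one-step gradient `g ∘ B` approximates the exact implicit gradient
`g ∘ (I - A)⁻¹ ∘ B` with error at most `λ·ρ·L / (1 - λ)`. -/
theorem sdo_one_step_gradient_error_parameters
    {X Y : Type*} [NormedAddCommGroup X] [NormedSpace ℝ X] [CompleteSpace X]
    [NormedAddCommGroup Y] [NormedSpace ℝ Y] [CompleteSpace Y]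
    (ρ L lam : ℝ) (hρ : 0 ≤ ρ) (hL : 0 ≤ L) (hlam0 : 0 ≤ lam) (hlam1 : lam < 1)
    (g : X →L[ℝ] ℝ) (hg : ‖g‖ ≤ ρ)
    (A : X →L[ℝ] X) (hA : ‖A‖ ≤ lam)
    (B : Y →L[ℝ] X) (hB : ‖B‖ ≤ L) :
    IsUnit (1 - A) ∧
      ‖g.comp ((Ring.inverse (1 - A)).comp B) - g.comp B‖ ≤ lam * ρ * L / (1 - lam) := by
  have hA1 : ‖A‖ < 1 := lt_of_le_of_lt hA hlam1
  have hunit : IsUnit (1 - A) := ⟨Units.oneSub A hA1, rfl⟩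
  refine ⟨hunit, ?_⟩
  set R := Ring.inverse (1 - A) with hR
  have hmul : (1 - A) * R = 1 := Ring.mul_inverse_cancel _ hunit
  have h1 : R = 1 + A * R := by
    have h : R - A * R = 1 := by rw [← hmul, sub_mul, one_mul]
    rw [sub_eq_iff_eq_add] at h; exact h
  have hkey : R - 1 = A * R := sub_eq_iff_eq_add.mpr (h1.trans (add_comm _ _))
  -- bound ‖R‖
  have hRnorm : ‖R‖ ≤ 1 / (1 - lam) := by
    have h2 : ‖R‖ ≤ 1 + lam * ‖R‖ := by
      calc ‖R‖ = ‖1 + A * R‖ := by rw [← h1]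
        _ ≤ ‖(1 : X →L[ℝ] X)‖ + ‖A * R‖ := norm_add_le _ _
        _ ≤ 1 + ‖A‖ * ‖R‖ := add_le_add ContinuousLinearMap.norm_id_le (norm_mul_le _ _)
        _ ≤ 1 + lam * ‖R‖ := by nlinarith [norm_nonneg R]
    rw [le_div_iff₀ (by linarith)]
    nlinarith
  have hRm1 : ‖R - 1‖ ≤ lam / (1 - lam) := by
    rw [hkey]
    calc ‖A * R‖ ≤ ‖A‖ * ‖R‖ := norm_mul_le _ _
      _ ≤ lam * (1 / (1 - lam)) := by
          apply mul_le_mul hA hRnorm (norm_nonneg R) hlam0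
      _ = lam / (1 - lam) := by ring
  have hdiff : g.comp (R.comp B) - g.comp B = (g.comp (R - 1)).comp B := by
    ext y; simp [ContinuousLinearMap.sub_comp, ContinuousLinearMap.comp_sub]
  rw [hdiff]
  calc ‖(g.comp (R - 1)).comp B‖ ≤ ‖g.comp (R - 1)‖ * ‖B‖ :=
        ContinuousLinearMap.opNorm_comp_le _ _
    _ ≤ ‖g‖ * ‖R - 1‖ * ‖B‖ := by
        apply mul_le_mul_of_nonneg_right (ContinuousLinearMap.opNorm_comp_le _ _) (norm_nonneg B)
    _ ≤ ρ * (lam / (1 - lam)) * L := by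
        have h0 : 0 ≤ 1 - lam := by linarith
        apply mul_le_mul _ hB (norm_nonneg B) (by positivity)
        apply mul_le_mul hg hRm1 (norm_nonneg _) hρ
    _ = lam * ρ * L / (1 - lam) := by ring
end

section
/- Let X and Y be real Banach spaces, and let ρ, λ be nonnegative real numbers with λ < 1. Let g : X →L[ℝ] ℝ be a continuous linear functional with ‖g‖ ≤ ρ, let A : X →L[ℝ] X be a continuous linear map with ‖A‖ ≤ λ, and let B : Y →L[ℝ] X be a continuous linear map with ‖B‖ ≤ λ. Then I − A is invertible as a continuous linear map, and ‖g ∘ (I − A)⁻¹ ∘ B − g ∘ B‖ ≤ λ²·ρ/(1 − λ). -/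
/-!
The error operator is `g ∘ ((I - A)⁻¹ - I) ∘ B`, and `(I - A)⁻¹ - I = ∑_{n ≥ 1} Aⁿ` is a Neumann
series of norm at most `‖A‖ / (1 - ‖A‖) ≤ λ / (1 - λ)`; the two outer factors contribute `ρ` and `λ`.
-/

open Ring

theorem norm_inverse_one_sub_sub_one_le {R : Type*} [NormedRing R] [HasSummableGeomSeries R]
    (x : R) (h : ‖x‖ < 1) : ‖inverse (1 - x) - 1‖ ≤ ‖x‖ / (1 - ‖x‖) := by
  rw [← geom_series_eq_inverse x h, ← geom_series_succ x h]
  have hsum : HasSum (fun n : ℕ ↦ ‖x‖ ^ (n + 1)) (‖x‖ / (1 - ‖x‖)) := by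
    simpa only [pow_succ', div_eq_mul_inv] using
      (hasSum_geometric_of_lt_one (norm_nonneg x) h).mul_left ‖x‖
  exact tsum_of_norm_bounded hsum fun n ↦ norm_pow_le' x n.succ_pos

theorem sdo_one_step_gradient_error_latent_general
    {X Y : Type*} [NormedAddCommGroup X] [NormedSpace ℝ X] [CompleteSpace X]
    [NormedAddCommGroup Y] [NormedSpace ℝ Y]
    (ρ lam : ℝ) (hlam1 : lam < 1)
    (g : X →L[ℝ] ℝ) (hg : ‖g‖ ≤ ρ)
    (A : X →L[ℝ] X) (hA : ‖A‖ ≤ lam)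
    (B : Y →L[ℝ] X) (hB : ‖B‖ ≤ lam) :
    IsUnit (1 - A) ∧
      ‖g.comp ((Ring.inverse (1 - A)).comp B) - g.comp B‖ ≤ lam ^ 2 * ρ / (1 - lam) := by
  have hA1 : ‖A‖ < 1 := hA.trans_lt hlam1
  have hlam0 : 0 ≤ lam := (norm_nonneg A).trans hA
  have hρ : 0 ≤ ρ := (norm_nonneg g).trans hg
  refine ⟨isUnit_one_sub_of_norm_lt_one hA1, ?_⟩
  have hdiff : g.comp ((inverse (1 - A)).comp B) - g.comp B
      = g.comp ((inverse (1 - A) - 1).comp B) := by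
    rw [ContinuousLinearMap.sub_comp, ContinuousLinearMap.comp_sub]
    rfl
  have hNeumann : ‖inverse (1 - A) - 1‖ ≤ lam / (1 - lam) :=
    (norm_inverse_one_sub_sub_one_le A hA1).trans (by gcongr)
  rw [hdiff]
  calc ‖g.comp ((inverse (1 - A) - 1).comp B)‖
      ≤ ‖g‖ * (‖inverse (1 - A) - 1‖ * ‖B‖) :=
        (g.opNorm_comp_le _).trans (by gcongr; exact ContinuousLinearMap.opNorm_comp_le _ _)
    _ ≤ ρ * (lam / (1 - lam) * lam) := by gcongr
    _ = lam ^ 2 * ρ / (1 - lam) := by ring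

/-- **Theorem 4.1 of the SDO paper (latent-variable case).** If `g : X →L[ℝ] ℝ` has norm
`≤ ρ`, `A : X →L[ℝ] X` has norm `≤ λ < 1`, and `B : Y →L[ℝ] X` has norm `≤ λ`, then
`I - A` is invertible and the one-step gradient `g ∘ B` approximates the exact implicit
gradient `g ∘ (I - A)⁻¹ ∘ B` with error at most `λ²·ρ / (1 - λ)`. -/
theorem sdo_one_step_gradient_error_latent
    {X Y : Type*} [NormedAddCommGroup X] [NormedSpace ℝ X] [CompleteSpace X]
    [NormedAddCommGroup Y] [NormedSpace ℝ Y] [CompleteSpace Y]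
    (ρ lam : ℝ) (hρ : 0 ≤ ρ) (hlam0 : 0 ≤ lam) (hlam1 : lam < 1)
    (g : X →L[ℝ] ℝ) (hg : ‖g‖ ≤ ρ)
    (A : X →L[ℝ] X) (hA : ‖A‖ ≤ lam)
    (B : Y →L[ℝ] X) (hB : ‖B‖ ≤ lam) :
    IsUnit (1 - A) ∧
      ‖g.comp ((Ring.inverse (1 - A)).comp B) - g.comp B‖ ≤ lam ^ 2 * ρ / (1 - lam) :=
  sdo_one_step_gradient_error_latent_general ρ lam hlam1 g hg A hA B hB
end
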